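/- Let z, w be points of the unit disc with 1-|w| ≤ (1-|z|)/(4(1+|z|)). Then -log|(z-w)/(1-w̄z)| ≤ 2·((1+|z|)/(1-|z|))·(1-|w|). -/

import Mathlib

/-!
Write `ρ = |(z - w)/(1 - w̄z)|`. The identity
`1 - ρ² = (1 - |z|²)(1 - |w|²)/|1 - w̄z|²`, together with `|1 - w̄z| ≥ 1 - |z|` and
`1 - |w|² ≤ 2(1 - |w|)`, gives `1 - ρ² ≤ 2 ((1 + |z|)/(1 - |z|)) (1 - |w|)`, and the hypothesis
makes this bound at most `1/2`. Hence `1/2 ≤ ρ² ≤ 1`, where `-log x ≤ 2(1 - x)`, so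
`-log ρ = -(log ρ²)/2 ≤ 1 - ρ²`.
-/

open Complex ComplexConjugate

theorem Real.neg_log_le_two_mul_one_sub {x : ℝ} (hx : 1 / 2 ≤ x) (hx₁ : x ≤ 1) :
    -Real.log x ≤ 2 * (1 - x) := by
  have hx₀ : 0 < x := by linarith
  have hlog := Real.one_sub_inv_le_log_of_pos hx₀
  have hinv : x⁻¹ - 1 ≤ 2 * (1 - x) := by
    rw [inv_eq_one_div, div_sub_one hx₀.ne', div_le_iff₀ hx₀]
    nlinarith
  linarith

theorem Complex.norm_one_sub_conj_mul_sq_sub_norm_sub_sq (z w : ℂ) :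
    ‖1 - conj w * z‖ ^ 2 - ‖z - w‖ ^ 2 = (1 - ‖z‖ ^ 2) * (1 - ‖w‖ ^ 2) := by
  simp only [Complex.sq_norm, normSq_apply, sub_re, sub_im, mul_re, mul_im, one_re, one_im,
    conj_re, conj_im]
  ring

theorem Complex.one_sub_norm_le_norm_one_sub_conj_mul {z w : ℂ} (hw : ‖w‖ ≤ 1) :
    1 - ‖z‖ ≤ ‖1 - conj w * z‖ := by
  have h := norm_sub_norm_le (1 : ℂ) (conj w * z)
  rw [norm_one, norm_mul, norm_conj] at h
  nlinarith [norm_nonneg z]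

theorem Complex.one_sub_norm_div_one_sub_conj_mul_sq {z w : ℂ} (hzw : 1 - conj w * z ≠ 0) :
    1 - ‖(z - w) / (1 - conj w * z)‖ ^ 2
      = (1 - ‖z‖ ^ 2) * (1 - ‖w‖ ^ 2) / ‖1 - conj w * z‖ ^ 2 := by
  have hpos : 0 < ‖1 - conj w * z‖ ^ 2 := by positivity
  rw [norm_div, div_pow, ← norm_one_sub_conj_mul_sq_sub_norm_sub_sq, sub_div,
    div_self hpos.ne']

theorem Complex.norm_div_one_sub_conj_mul_le_one {z w : ℂ} (hz : ‖z‖ ≤ 1) (hw : ‖w‖ ≤ 1) :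
    ‖(z - w) / (1 - conj w * z)‖ ≤ 1 := by
  rcases eq_or_ne (1 - conj w * z) 0 with hzw | hzw
  · simp [hzw]
  have hsq : 0 ≤ 1 - ‖(z - w) / (1 - conj w * z)‖ ^ 2 := by
    rw [one_sub_norm_div_one_sub_conj_mul_sq hzw]
    have : 0 ≤ 1 - ‖z‖ ^ 2 := by nlinarith [norm_nonneg z]
    have : 0 ≤ 1 - ‖w‖ ^ 2 := by nlinarith [norm_nonneg w]
    positivity
  nlinarith [norm_nonneg ((z - w) / (1 - conj w * z))]

theorem Complex.one_sub_norm_div_one_sub_conj_mul_sq_le {z w : ℂ} (hz : ‖z‖ < 1)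
    (hw : ‖w‖ ≤ 1) :
    1 - ‖(z - w) / (1 - conj w * z)‖ ^ 2 ≤ 2 * ((1 + ‖z‖) / (1 - ‖z‖)) * (1 - ‖w‖) := by
  have hz₁ : 0 < 1 - ‖z‖ := by linarith
  have hden : 1 - ‖z‖ ≤ ‖1 - conj w * z‖ := one_sub_norm_le_norm_one_sub_conj_mul hw
  have hzw : 1 - conj w * z ≠ 0 := norm_pos_iff.mp (hz₁.trans_le hden)
  have hw₂ : 1 - ‖w‖ ^ 2 ≤ 2 * (1 - ‖w‖) := by nlinarith [norm_nonneg w]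
  rw [one_sub_norm_div_one_sub_conj_mul_sq hzw]
  calc (1 - ‖z‖ ^ 2) * (1 - ‖w‖ ^ 2) / ‖1 - conj w * z‖ ^ 2
      = (1 - ‖z‖) * (1 + ‖z‖) * (1 - ‖w‖ ^ 2) / ‖1 - conj w * z‖ ^ 2 := by ring
    _ ≤ (1 - ‖z‖) * (1 + ‖z‖) * (2 * (1 - ‖w‖)) / (1 - ‖z‖) ^ 2 := by
        have := norm_nonneg z
        gcongr
    _ = 2 * ((1 + ‖z‖) / (1 - ‖z‖)) * (1 - ‖w‖) := by
        field_simp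

/-- If `1 - |w| ≤ (1-|z|)/(4(1+|z|))` for points of the unit disc, then
`-log|(z-w)/(1-conj w · z)| ≤ 2 ((1+|z|)/(1-|z|)) (1-|w|)`. -/
theorem stmt_5 (z w : ℂ) (hz : ‖z‖ < 1) (hw : ‖w‖ < 1)
    (h : 1 - ‖w‖ ≤ (1 - ‖z‖) / (4 * (1 + ‖z‖))) :
    -Real.log (‖(z - w) / (1 - (starRingEnd ℂ) w * z)‖)
      ≤ 2 * ((1 + ‖z‖) / (1 - ‖z‖)) * (1 - ‖w‖) := by
  set ρ := ‖(z - w) / (1 - conj w * z)‖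
  set B := 2 * ((1 + ‖z‖) / (1 - ‖z‖)) * (1 - ‖w‖)
  have hbound : 1 - ρ ^ 2 ≤ B := one_sub_norm_div_one_sub_conj_mul_sq_le hz hw.le
  have hB : B ≤ 1 / 2 := by
    have hz₁ : 0 < 1 - ‖z‖ := by linarith
    rw [le_div_iff₀ (by positivity)] at h
    calc B = 2 * (1 + ‖z‖) * (1 - ‖w‖) / (1 - ‖z‖) := by ring
      _ ≤ 1 / 2 := by rw [div_le_iff₀ hz₁]; linarith
  have hρ₁ : ρ ^ 2 ≤ 1 :=
    pow_le_one₀ (norm_nonneg _) (norm_div_one_sub_conj_mul_le_one hz.le hw.le)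
  calc -Real.log ρ = -Real.log (ρ ^ 2) / 2 := by rw [Real.log_pow]; push_cast; ring
    _ ≤ 2 * (1 - ρ ^ 2) / 2 := by
        gcongr
        exact Real.neg_log_le_two_mul_one_sub (by linarith) hρ₁
    _ ≤ B := by linarith
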